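/- arXiv:1604.08943 — 5 statements merged into one kernel-verified Lean document; each statement's English description precedes it below -/
import Mathlib

section
/- Let μ₁, μ₂ ∈ ℝ_+^n be mean vectors and let p(·|μ) denote the law of a vector of n independent Poisson random variables with mean vector μ (the product of Poisson distributions with means μ_i). If there exists c > 0 such that every coordinate of μ₂ satisfies (μ₂)_i ≥ c, then the Kullback–Leibler divergence satisfies KL(p(·|μ₁) ‖ p(·|μ₂)) ≤ (1/c)·‖μ₁ − μ₂‖₂². -/
open scoped BigOperators ENNReal NNReal
open MeasureTheory ProbabilityTheory

/-- The law of a vector of `n` independent Poisson random variables with mean vector `μ`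
(the product of Poisson distributions with means `μ i`). -/
noncomputable def poissonVecMeasure {n : ℕ} (μ : Fin n → ℝ) : Measure (Fin n → ℕ) :=
  Measure.pi fun i => poissonMeasure (μ i).toNNReal

/-- Kullback–Leibler divergence between two probability distributions on the countable
space `Fin n → ℕ`. -/
noncomputable def klDivCount {n : ℕ} (P Q : Measure (Fin n → ℕ)) : ℝ :=
  ∑' y : Fin n → ℕ, (P {y}).toReal * Real.log ((P {y}).toReal / (Q {y}).toReal)

/-!
Both distributions are products, so the log-likelihood ratio of `p(·|μ₁)` to `p(·|μ₂)` is a sum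
of one-dimensional Poisson log-likelihood ratios `b - a + k log (a / b)`, which are affine in `k`.
Integrating against `p(·|μ₁)` and using that a Poisson variable has mean equal to its rate gives
`KL = ∑ᵢ (b - a + a log (a / b))` with `a = μ₁ i`, `b = μ₂ i`; by `log x ≤ x - 1` each term is at
most `(a - b)² / b ≤ (a - b)² / c`.
-/

open Real
open scoped Nat

lemma hasSum_poissonMeasure_real_mul_natCast (r : ℝ≥0) :
    HasSum (fun k : ℕ ↦ (poissonMeasure r).real {k} * k) r := by
  have hshift (k : ℕ) : (poissonMeasure r).real {k + 1} * ((k : ℝ) + 1)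
      = r * (exp (-r) * r ^ k / k !) := by
    rw [poissonMeasure_real_singleton, Nat.factorial_succ, pow_succ]
    push_cast
    field_simp
  refine (hasSum_nat_add_iff' 1).mp ?_
  simpa [hshift] using (hasSum_one_poissonMeasure r).mul_left (r : ℝ)

lemma integrable_natCast_poissonMeasure (r : ℝ≥0) :
    Integrable (fun k : ℕ ↦ (k : ℝ)) (poissonMeasure r) := by
  rw [integrable_poissonMeasure_iff]
  simpa [poissonMeasure_real_singleton] using (hasSum_poissonMeasure_real_mul_natCast r).summable

lemma integral_natCast_poissonMeasure (r : ℝ≥0) :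
    ∫ k : ℕ, (k : ℝ) ∂poissonMeasure r = r := by
  rw [integral_countable (integrable_natCast_poissonMeasure r)]
  exact (hasSum_poissonMeasure_real_mul_natCast r).tsum_eq

noncomputable def poissonLogRatio (a b : ℝ≥0) (k : ℕ) : ℝ := b - a + k * log (a / b)

-- The hypothesis `hk` excludes `a = 0 < k`, where the left side is the junk value `log 0 = 0`.
lemma log_poissonMeasure_real_singleton_div {a b : ℝ≥0} (hb : 0 < b) {k : ℕ}
    (hk : (poissonMeasure a).real {k} ≠ 0) :
    log ((poissonMeasure a).real {k} / (poissonMeasure b).real {k}) = poissonLogRatio a b k := by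
  rw [poissonMeasure_real_singleton] at hk
  have hak : ((a : ℝ) / b) ^ k ≠ 0 := by
    rw [div_pow]
    exact div_ne_zero (fun h ↦ hk (by simp [h])) (by positivity)
  have hratio : (poissonMeasure a).real {k} / (poissonMeasure b).real {k}
      = exp (b - a) * ((a : ℝ) / b) ^ k := by
    simp only [poissonMeasure_real_singleton, div_pow, sub_eq_add_neg, exp_add]
    field_simp
    rw [mul_assoc, ← exp_add, neg_add_cancel, exp_zero, mul_one]
  rw [hratio, log_mul (exp_ne_zero _) hak, log_exp, log_pow, poissonLogRatio]

lemma integrable_poissonLogRatio (a b : ℝ≥0) :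
    Integrable (poissonLogRatio a b) (poissonMeasure a) :=
  (integrable_const _).add ((integrable_natCast_poissonMeasure a).mul_const _)

lemma integral_poissonLogRatio (a b : ℝ≥0) :
    ∫ k, poissonLogRatio a b k ∂poissonMeasure a = b - a + a * log (a / b) := by
  rw [show poissonLogRatio a b = fun k : ℕ ↦ (b - a : ℝ) + k * log (a / b) from rfl,
    integral_add (integrable_const _) ((integrable_natCast_poissonMeasure a).mul_const _),
    integral_mul_const, integral_natCast_poissonMeasure]
  simp

lemma sub_add_mul_log_div_le_sq_div {a b : ℝ} (ha : 0 ≤ a) (hb : 0 < b) :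
    b - a + a * log (a / b) ≤ (a - b) ^ 2 / b := by
  have hlog : a * log (a / b) ≤ a * (a / b - 1) := by
    rcases ha.eq_or_lt with rfl | ha
    · simp
    · exact mul_le_mul_of_nonneg_left (log_le_sub_one_of_pos (by positivity)) ha.le
  have hsq : b - a + a * (a / b - 1) = (a - b) ^ 2 / b := by
    field_simp
    ring
  linarith

lemma poissonVecMeasure_real_singleton {n : ℕ} (μ : Fin n → ℝ) (y : Fin n → ℕ) :
    (poissonVecMeasure μ).real {y} = ∏ i, (poissonMeasure (μ i).toNNReal).real {y i} := by
  simp [measureReal_def, poissonVecMeasure, ENNReal.toReal_prod]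

lemma log_poissonVecMeasure_real_singleton_div {n : ℕ} {μ₁ μ₂ : Fin n → ℝ}
    (hμ₂ : ∀ i, 0 < (μ₂ i).toNNReal) {y : Fin n → ℕ} (hy : (poissonVecMeasure μ₁).real {y} ≠ 0) :
    log ((poissonVecMeasure μ₁).real {y} / (poissonVecMeasure μ₂).real {y})
      = ∑ i, poissonLogRatio (μ₁ i).toNNReal (μ₂ i).toNNReal (y i) := by
  rw [poissonVecMeasure_real_singleton] at hy
  have hpos : ∀ i, (poissonMeasure (μ₁ i).toNNReal).real {y i} ≠ 0 :=
    fun i ↦ Finset.prod_ne_zero_iff.mp hy i (Finset.mem_univ i)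
  rw [poissonVecMeasure_real_singleton, poissonVecMeasure_real_singleton,
    ← Finset.prod_div_distrib, log_prod]
  · exact Finset.sum_congr rfl fun i _ ↦ log_poissonMeasure_real_singleton_div (hμ₂ i) (hpos i)
  · exact fun i _ ↦ div_ne_zero (hpos i) (poissonMeasure_real_singleton_pos _ (hμ₂ i)).ne'

lemma klDivCount_eq_integral {n : ℕ} {P Q : Measure (Fin n → ℕ)} {F : (Fin n → ℕ) → ℝ}
    (hF : Integrable F P) (hlog : ∀ y, P.real {y} ≠ 0 → log (P.real {y} / Q.real {y}) = F y) :
    klDivCount P Q = ∫ y, F y ∂P := by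
  rw [integral_countable hF, klDivCount]
  refine tsum_congr fun y ↦ ?_
  by_cases hy : P.real {y} = 0
  · simp [← measureReal_def, hy]
  · simp [← measureReal_def, hlog y hy]

/-- If every coordinate of `μ₂` is at least `c > 0`, then
`KL(p(·|μ₁) ‖ p(·|μ₂)) ≤ (1/c) ‖μ₁ − μ₂‖₂²`. -/
theorem kl_poisson_le_sq_l2
    (n : ℕ) (μ₁ μ₂ : Fin n → ℝ) (hμ₁ : ∀ i, 0 ≤ μ₁ i)
    (c : ℝ) (hc : 0 < c) (hμ₂ : ∀ i, c ≤ μ₂ i) :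
    klDivCount (poissonVecMeasure μ₁) (poissonVecMeasure μ₂) ≤
      (1 / c) * ∑ i, (μ₁ i - μ₂ i) ^ 2 := by
  have hμ₂pos : ∀ i, 0 < μ₂ i := fun i ↦ hc.trans_le (hμ₂ i)
  have hint : ∀ i, Integrable (fun y : Fin n → ℕ ↦
      poissonLogRatio (μ₁ i).toNNReal (μ₂ i).toNNReal (y i)) (poissonVecMeasure μ₁) :=
    fun i ↦ integrable_comp_eval (integrable_poissonLogRatio _ _)
  rw [klDivCount_eq_integral (integrable_finsetSum _ fun i _ ↦ hint i)
      fun y ↦ log_poissonVecMeasure_real_singleton_div fun i ↦ Real.toNNReal_pos.2 (hμ₂pos i),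
    integral_finsetSum _ fun i _ ↦ hint i, Finset.mul_sum]
  gcongr with i
  rw [poissonVecMeasure, integral_comp_eval .of_discrete, integral_poissonLogRatio,
    Real.coe_toNNReal _ (hμ₁ i), Real.coe_toNNReal _ (hμ₂pos i).le]
  calc _ ≤ (μ₁ i - μ₂ i) ^ 2 / μ₂ i := sub_add_mul_log_div_le_sq_div (hμ₁ i) (hμ₂pos i)
    _ ≤ (μ₁ i - μ₂ i) ^ 2 / c := by gcongr; exact hμ₂ i
    _ = 1 / c * (μ₁ i - μ₂ i) ^ 2 := by ring
end

section
/- Let y ∈ ℕ^n have independent coordinates y_i ~ Poisson(T·(ADθ*)_i), where T > 2n log p, the sensing matrix A satisfies the sensing-matrix construction with constants a_ℓ < a_u and Ã, the upper RIP holds for ÃD with constant δ_{K̃} (so that Σ_{i=1}^n (AD)_{ij}² ≤ M/n with M = (1+δ_{K̃})/(4(a_u − a_ℓ)²) for each j ≥ 2), and f* = Dθ* satisfies f* ⪰ 0 and ‖f*‖₁ = 1. Then with probability at least 1 − 2/(p−1), ‖(2n/T)·(y − T·ADθ*)^⊤ A D̄‖_∞ ≤ √(32 M log p / T). -/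
/-!
Write the `j`-th coordinate of the statistic as `∑ᵢ cᵢ (yᵢ - rᵢ)` with `rᵢ = T (A f*)ᵢ` and
`cᵢ = (2n/T) (AD)ᵢⱼ`. A centred Poisson variable of mean `r` has log-mgf `r (eˢ - 1 - s) ≤ r s²`
for `|s| ≤ 1`, so by independence and Chernoff's bound `|∑ᵢ cᵢ (yᵢ - rᵢ)| ≥ t` has probability at
most `2 exp (-t² / 4v)` as soon as `∑ᵢ rᵢ cᵢ² ≤ v` and `|t cᵢ| ≤ 2v` (Bernstein-type bound).

The construction of `A` puts its entries in `[1/(2n), 1/n]`, so `rᵢ ≤ T/n`. The columns of `D̄` are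
orthogonal to the constant column `d₁`, so the constant shift in `A` vanishes in `AD̄`, and the RIP
applied to a 1-sparse vector bounds every squared column norm of `AD̄` by `M/n`. Hence `v = 4M/T`
works, the condition on the `cᵢ` reduces to `2n log p ≤ T`, and each coordinate exceeds the
threshold with probability at most `2/p²`; a union bound over the `p - 1` coordinates concludes.
-/

open scoped BigOperators ENNReal NNReal
open MeasureTheory ProbabilityTheory Finset

/-- The embedding of coordinate indices `{1, …, p−1}` (i.e. coordinates `2, …, p`)
into `Fin p`. -/
def finShift {p : ℕ} (j : Fin (p - 1)) : Fin p :=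
  ⟨j.val + 1, by have := j.isLt; omega⟩

open Real

lemma hasSum_poisson_mul_exp_mul (r : ℝ≥0) (s : ℝ) :
    HasSum (fun k : ℕ ↦ exp (-r) * r ^ k / k.factorial * exp (s * k))
      (exp (r * (exp s - 1))) := by
  have h := (NormedSpace.expSeries_div_hasSum_exp ((r : ℝ) * exp s)).mul_left (exp (-r))
  rw [← exp_eq_exp_ℝ, ← exp_add, show -(r : ℝ) + r * exp s = r * (exp s - 1) by ring] at h
  refine h.congr_fun fun k ↦ ?_
  rw [mul_pow, ← exp_nat_mul, mul_comm (k : ℝ) s]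
  ring

lemma integral_exp_mul_poissonMeasure (r : ℝ≥0) (s : ℝ) :
    ∫ k : ℕ, exp (s * k) ∂poissonMeasure r = exp (r * (exp s - 1)) := by
  rw [integral_poissonMeasure]
  exact (hasSum_poisson_mul_exp_mul r s).tsum_eq

lemma mgf_sub_of_map_eq_poissonMeasure {Ω : Type*} [MeasurableSpace Ω] {P : Measure Ω}
    {X : Ω → ℕ} {r : ℝ≥0} (hX : Measurable X) (hlaw : P.map X = poissonMeasure r) (s : ℝ) :
    mgf (fun ω ↦ (X ω : ℝ) - r) P s = exp (r * (exp s - 1 - s)) := by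
  have hmgf : mgf (fun ω ↦ (X ω : ℝ)) P s = exp (r * (exp s - 1)) := by
    rw [← integral_exp_mul_poissonMeasure, ← hlaw]
    exact (mgf_map hX.aemeasurable (by fun_prop)).symm
  simp_rw [sub_eq_add_neg _ (r : ℝ)]
  rw [mgf_add_const, hmgf, ← exp_add]
  ring_nf

lemma measureReal_le_abs_le_of_mgf_le {Ω : Type*} [MeasurableSpace Ω] {μ : Measure Ω}
    [IsFiniteMeasure μ] {Z : Ω → ℝ} {l t b : ℝ} (hl : 0 ≤ l)
    (hint : Integrable (fun ω ↦ exp (l * Z ω)) μ)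
    (hint_neg : Integrable (fun ω ↦ exp (-l * Z ω)) μ)
    (hb : mgf Z μ l ≤ b) (hb_neg : mgf Z μ (-l) ≤ b) :
    μ.real {ω | t ≤ |Z ω|} ≤ 2 * exp (-(l * t)) * b := by
  have hsplit : {ω | t ≤ |Z ω|} ⊆ {ω | t ≤ Z ω} ∪ {ω | Z ω ≤ -t} := fun ω (hω : t ≤ |Z ω|) ↦
    (le_abs'.mp hω).elim (fun h ↦ Or.inr (show Z ω ≤ -t by linarith)) Or.inl
  have hup : μ.real {ω | t ≤ Z ω} ≤ exp (-(l * t)) * b := by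
    calc _ ≤ exp (-l * t) * mgf Z μ l := measure_ge_le_exp_mul_mgf t hl hint
      _ ≤ _ := by rw [neg_mul]; gcongr
  have hlo : μ.real {ω | Z ω ≤ -t} ≤ exp (-(l * t)) * b := by
    calc _ ≤ exp (-(-l) * -t) * mgf Z μ (-l) :=
          measure_le_le_exp_mul_mgf (-t) (neg_nonpos.mpr hl) hint_neg
      _ ≤ _ := by rw [neg_neg, mul_neg]; gcongr
  calc μ.real {ω | t ≤ |Z ω|} ≤ μ.real {ω | t ≤ Z ω} + μ.real {ω | Z ω ≤ -t} :=
        (measureReal_mono hsplit).trans (measureReal_union_le _ _)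
    _ ≤ 2 * exp (-(l * t)) * b := by linarith

section WeightedPoissonSum

variable {Ω ι : Type*} [MeasurableSpace Ω] {P : Measure Ω} [Fintype ι]
  {y : ι → Ω → ℕ} {r : ι → ℝ≥0} (c : ι → ℝ)

lemma mgf_sum_mul_sub_of_map_eq_poissonMeasure (hmeas : ∀ i, Measurable (y i))
    (hlaw : ∀ i, P.map (y i) = poissonMeasure (r i)) (hindep : iIndepFun y P) (l : ℝ) :
    mgf (fun ω ↦ ∑ i, c i * ((y i ω : ℝ) - r i)) P l
      = exp (∑ i, r i * (exp (l * c i) - 1 - l * c i)) := by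
  have hsum : (fun ω ↦ ∑ i, c i * ((y i ω : ℝ) - r i))
      = ∑ i, fun ω ↦ c i * ((y i ω : ℝ) - r i) := by
    ext ω; rw [Finset.sum_apply]
  have hindep' : iIndepFun (fun i ω ↦ c i * ((y i ω : ℝ) - r i)) P :=
    hindep.comp (fun i k ↦ c i * ((k : ℝ) - r i)) fun _ ↦ measurable_from_top
  rw [hsum, hindep'.mgf_sum (fun i ↦ by fun_prop), exp_sum]
  refine Finset.prod_congr rfl fun i _ ↦ ?_
  rw [mgf_const_mul, mul_comm (c i), mgf_sub_of_map_eq_poissonMeasure (hmeas i) (hlaw i)]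

lemma mgf_sum_mul_sub_le_of_map_eq_poissonMeasure (hmeas : ∀ i, Measurable (y i))
    (hlaw : ∀ i, P.map (y i) = poissonMeasure (r i)) (hindep : iIndepFun y P) {l : ℝ}
    (hc : ∀ i, |l * c i| ≤ 1) :
    mgf (fun ω ↦ ∑ i, c i * ((y i ω : ℝ) - r i)) P l ≤ exp (l ^ 2 * ∑ i, r i * c i ^ 2) := by
  rw [mgf_sum_mul_sub_of_map_eq_poissonMeasure c hmeas hlaw hindep, Finset.mul_sum]
  refine exp_le_exp.mpr (Finset.sum_le_sum fun i _ ↦ ?_)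
  have h := Real.norm_exp_sub_one_sub_id_le (hc i)
  rw [Real.norm_eq_abs, Real.norm_eq_abs, sq_abs] at h
  calc (r i : ℝ) * (exp (l * c i) - 1 - l * c i) ≤ r i * (l * c i) ^ 2 :=
        mul_le_mul_of_nonneg_left ((le_abs_self _).trans h) (r i).coe_nonneg
    _ = l ^ 2 * (r i * c i ^ 2) := by ring

lemma integrable_exp_mul_sum_mul_sub_of_map_eq_poissonMeasure (hmeas : ∀ i, Measurable (y i))
    (hlaw : ∀ i, P.map (y i) = poissonMeasure (r i)) (hindep : iIndepFun y P) (l : ℝ) :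
    Integrable (fun ω ↦ exp (l * ∑ i, c i * ((y i ω : ℝ) - r i))) P := by
  have := hindep.isProbabilityMeasure
  rw [← mgf_pos_iff, mgf_sum_mul_sub_of_map_eq_poissonMeasure c hmeas hlaw hindep]
  exact exp_pos _

theorem measureReal_le_abs_sum_mul_sub_le (hmeas : ∀ i, Measurable (y i))
    (hlaw : ∀ i, P.map (y i) = poissonMeasure (r i)) (hindep : iIndepFun y P) {t v : ℝ}
    (ht : 0 ≤ t) (hc : ∀ i, |t * c i| ≤ 2 * v) (hv : ∑ i, r i * c i ^ 2 ≤ v) :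
    P.real {ω | t ≤ |∑ i, c i * ((y i ω : ℝ) - r i)|} ≤ 2 * exp (-(t ^ 2 / (4 * v))) := by
  have := hindep.isProbabilityMeasure
  have hv0 : 0 ≤ v := (Finset.sum_nonneg fun i _ ↦ by positivity).trans hv
  -- `t / (2 v)` minimises `-l t + l² v`
  obtain ⟨l, hl⟩ : ∃ l, l = t / (2 * v) := ⟨_, rfl⟩
  have hlc : ∀ l' : ℝ, |l'| = l → ∀ i, |l' * c i| ≤ 1 := fun l' hl' i ↦ by
    rw [abs_mul, hl', hl, div_mul_eq_mul_div, ← abs_of_nonneg ht, ← abs_mul]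
    exact div_le_one_of_le₀ (hc i) (by positivity)
  have hbound : ∀ l' : ℝ, |l'| = l →
      mgf (fun ω ↦ ∑ i, c i * ((y i ω : ℝ) - r i)) P l' ≤ exp (l ^ 2 * v) := fun l' hl' ↦ by
    refine (mgf_sum_mul_sub_le_of_map_eq_poissonMeasure c hmeas hlaw hindep (hlc l' hl')).trans ?_
    rw [← sq_abs l', hl']
    gcongr
  have hexp : exp (-(l * t)) * exp (l ^ 2 * v) = exp (-(t ^ 2 / (4 * v))) := by
    rw [← exp_add]
    congr 1
    rcases hv0.eq_or_lt with rfl | hv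
    · simp [hl]
    · rw [hl]; field_simp; ring
  have hl0 : 0 ≤ l := hl ▸ by positivity
  have habs : |l| = l := abs_of_nonneg hl0
  calc _ ≤ 2 * exp (-(l * t)) * exp (l ^ 2 * v) :=
        measureReal_le_abs_le_of_mgf_le hl0
          (integrable_exp_mul_sum_mul_sub_of_map_eq_poissonMeasure c hmeas hlaw hindep l)
          (integrable_exp_mul_sum_mul_sub_of_map_eq_poissonMeasure c hmeas hlaw hindep (-l))
          (hbound l habs) (hbound (-l) (by rw [abs_neg, habs]))
    _ = 2 * exp (-(t ^ 2 / (4 * v))) := by rw [mul_assoc, hexp]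

end WeightedPoissonSum

theorem measureReal_le_abs_scaled_residual_le {Ω : Type*} [MeasurableSpace Ω] {P : Measure Ω}
    {n : ℕ} {y : Fin n → Ω → ℕ} {T L M : ℝ} {μ b : Fin n → ℝ}
    (hn : 0 < n) (hT : 0 < T) (hL : 0 ≤ L) (hnL : 2 * n * L ≤ T) (hM : 0 < M)
    (hμ : ∀ i, μ i ∈ Set.Icc 0 (1 / (n : ℝ))) (hb : ∑ i, b i ^ 2 ≤ M / n)
    (hmeas : ∀ i, Measurable (y i))
    (hlaw : ∀ i, P.map (y i) = poissonMeasure (T * μ i).toNNReal) (hindep : iIndepFun y P) :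
    P.real {ω | √(32 * M * L / T) ≤ |2 * n / T * ∑ i, ((y i ω : ℝ) - T * μ i) * b i|}
      ≤ 2 * exp (-(2 * L)) := by
  have hn' : (0 : ℝ) < n := Nat.cast_pos.mpr hn
  set t := √(32 * M * L / T)
  have ht2 : t ^ 2 = 32 * M * L / T := sq_sqrt (by positivity)
  have hr : ∀ i, ((T * μ i).toNNReal : ℝ) = T * μ i :=
    fun i ↦ Real.coe_toNNReal _ (mul_nonneg hT.le (hμ i).1)
  have hset : {ω | t ≤ |2 * n / T * ∑ i, ((y i ω : ℝ) - T * μ i) * b i|}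
      = {ω | t ≤ |∑ i, 2 * n / T * b i * ((y i ω : ℝ) - (T * μ i).toNNReal)|} := by
    ext ω
    simp only [hr, Finset.mul_sum, Set.mem_ofPred_eq, mul_comm (b _), mul_assoc]
  have hv : ∑ i, ((T * μ i).toNNReal : ℝ) * (2 * n / T * b i) ^ 2 ≤ 4 * M / T :=
    calc _ ≤ ∑ i, T * (1 / n) * (2 * n / T * b i) ^ 2 :=
          Finset.sum_le_sum fun i _ ↦ by rw [hr]; gcongr; exact (hμ i).2
      _ = 4 * n / T * ∑ i, b i ^ 2 := by
          rw [Finset.mul_sum]; refine Finset.sum_congr rfl fun i _ ↦ ?_; field_simp; ring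
      _ ≤ 4 * n / T * (M / n) := by gcongr
      _ = 4 * M / T := by field_simp
  have hc : ∀ i, |t * (2 * n / T * b i)| ≤ 2 * (4 * M / T) := fun i ↦ by
    have hbi : b i ^ 2 ≤ M / n :=
      (Finset.single_le_sum (fun i _ ↦ sq_nonneg (b i)) (Finset.mem_univ i)).trans hb
    refine abs_le_of_sq_le_sq ?_ (by positivity)
    calc (t * (2 * n / T * b i)) ^ 2 = t ^ 2 * (2 * n / T) ^ 2 * b i ^ 2 := by ring
      _ ≤ 32 * M * L / T * (2 * n / T) ^ 2 * (M / n) := by rw [ht2]; gcongr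
      _ = (2 * n * L) * (64 * M ^ 2 / T ^ 3) := by field_simp; ring
      _ ≤ T * (64 * M ^ 2 / T ^ 3) := by gcongr
      _ = (2 * (4 * M / T)) ^ 2 := by field_simp; ring
  rw [hset]
  calc _ ≤ 2 * exp (-(t ^ 2 / (4 * (4 * M / T)))) :=
        measureReal_le_abs_sum_mul_sub_le _ hmeas hlaw hindep (sqrt_nonneg _) hc hv
    _ = 2 * exp (-(2 * L)) := by rw [ht2]; congr 2; field_simp; ring

section SensingMatrix

open scoped Matrix

variable {ι κ : Type*}

lemma sensing_apply_mem_Icc {n aℓ au : ℝ} (hn : 0 < n) (hau : aℓ < au) {Atil A : Matrix ι κ ℝ}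
    (hAtil : ∀ i j, Atil i j ∈ Set.Icc (aℓ / √n) (au / √n))
    (hA : A = (2 * (au - aℓ) * √n)⁻¹ • (Atil + Matrix.of fun _ _ ↦ (au - 2 * aℓ) / √n))
    (i : ι) (j : κ) :
    A i j ∈ Set.Icc (1 / (2 * n)) (1 / n) := by
  have hs : 0 < √n := sqrt_pos.mpr hn
  have hd : 0 < au - aℓ := sub_pos.mpr hau
  obtain ⟨h1, h2⟩ := hAtil i j
  rw [div_le_iff₀ hs] at h1
  rw [le_div_iff₀ hs] at h2
  have hA' : A i j = (Atil i j * √n + au - 2 * aℓ) / (2 * (au - aℓ) * n) := by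
    rw [hA]
    simp only [Matrix.smul_apply, Matrix.add_apply, Matrix.of_apply, smul_eq_mul]
    field_simp
    rw [sq_sqrt hn.le]
    ring
  rw [hA']
  constructor
  · rw [div_le_div_iff₀ (by positivity) (by positivity)]; nlinarith
  · rw [div_le_div_iff₀ (by positivity) hn]; nlinarith

lemma mulVec_mem_Icc_of_mem_Icc [Fintype κ] {A : Matrix ι κ ℝ} {f : κ → ℝ} {a b : ℝ}
    (hA : ∀ i j, A i j ∈ Set.Icc a b) (hf : ∀ j, 0 ≤ f j) (hf1 : ∑ j, f j = 1) (i : ι) :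
    (A *ᵥ f) i ∈ Set.Icc a b := by
  simp only [Matrix.mulVec, dotProduct]
  constructor
  · calc a = ∑ j, a * f j := by rw [← Finset.mul_sum, hf1, mul_one]
      _ ≤ ∑ j, A i j * f j := Finset.sum_le_sum fun j _ ↦ by gcongr; exacts [hf j, (hA i j).1]
  · calc ∑ j, A i j * f j ≤ ∑ j, b * f j :=
          Finset.sum_le_sum fun j _ ↦ by gcongr; exacts [hf j, (hA i j).2]
      _ = b := by rw [← Finset.mul_sum, hf1, mul_one]

lemma sum_apply_eq_zero_of_transpose_mul_self_eq_one [Fintype κ] [DecidableEq ι]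
    {D : Matrix κ ι ℝ} (hD : Dᵀ * D = 1) {j₀ j : ι} {c : ℝ} (hc : c ≠ 0)
    (hD₀ : ∀ k, D k j₀ = c) (hj : j ≠ j₀) :
    ∑ k, D k j = 0 := by
  have h := congr_fun (congr_fun hD j₀) j
  simp only [Matrix.mul_apply, Matrix.transpose_apply, hD₀, Matrix.one_apply_ne hj.symm,
    ← Finset.mul_sum] at h
  exact (mul_eq_zero.mp h).resolve_left hc

lemma smul_add_const_mul_apply [Fintype κ] {μ : Type*} (c β : ℝ) (B : Matrix ι κ ℝ)
    {D : Matrix κ μ ℝ} {j : μ} (hD : ∑ k, D k j = 0) (i : ι) :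
    ((c • (B + (Matrix.of fun _ _ ↦ β : Matrix ι κ ℝ))) * D) i j = c * (B * D) i j := by
  simp only [Matrix.mul_apply, Matrix.smul_apply, Matrix.add_apply, Matrix.of_apply, smul_eq_mul,
    mul_add, add_mul, Finset.sum_add_distrib, mul_assoc, ← Finset.mul_sum, hD]
  ring

lemma sum_sq_mul_apply_le_of_rip [Fintype ι] [Fintype κ] [DecidableEq κ] {B : Matrix ι κ ℝ}
    {D : Matrix κ κ ℝ} {K : ℕ} (hK : 1 ≤ K) {δ : ℝ}
    (hRIP : ∀ u : κ → ℝ, (Finset.univ.filter fun j ↦ u j ≠ 0).card ≤ 2 * K →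
      ∑ i, (B *ᵥ (D *ᵥ u)) i ^ 2 ≤ (1 + δ) * ∑ j, u j ^ 2) (j : κ) :
    ∑ i, (B * D) i j ^ 2 ≤ 1 + δ := by
  have h := hRIP (Pi.single j 1) (by simp [Pi.single_apply, Finset.filter_eq']; omega)
  rw [Matrix.mulVec_mulVec, Matrix.mulVec_single_one] at h
  simpa [Pi.single_apply] using h

lemma sum_sq_sensing_mul_apply_le [Fintype ι] [Fintype κ] [DecidableEq κ] {n aℓ au δ : ℝ}
    (hn : 0 < n) (hau : aℓ < au) {Atil A : Matrix ι κ ℝ}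
    (hA : A = (2 * (au - aℓ) * √n)⁻¹ • (Atil + Matrix.of fun _ _ ↦ (au - 2 * aℓ) / √n))
    {D : Matrix κ κ ℝ} {K : ℕ} (hK : 1 ≤ K)
    (hRIP : ∀ u : κ → ℝ, (Finset.univ.filter fun j ↦ u j ≠ 0).card ≤ 2 * K →
      ∑ i, (Atil *ᵥ (D *ᵥ u)) i ^ 2 ≤ (1 + δ) * ∑ j, u j ^ 2)
    {j : κ} (hD : ∑ k, D k j = 0) :
    ∑ i, (A * D) i j ^ 2 ≤ (1 + δ) / (4 * (au - aℓ) ^ 2) / n := by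
  have hd : au - aℓ ≠ 0 := (sub_pos.mpr hau).ne'
  calc ∑ i, (A * D) i j ^ 2 = (2 * (au - aℓ) * √n)⁻¹ ^ 2 * ∑ i, (Atil * D) i j ^ 2 := by
        simp only [hA, smul_add_const_mul_apply _ _ _ hD, mul_pow, Finset.mul_sum]
    _ ≤ (2 * (au - aℓ) * √n)⁻¹ ^ 2 * (1 + δ) := by
        gcongr; exact sum_sq_mul_apply_le_of_rip hK hRIP j
    _ = (1 + δ) / (4 * (au - aℓ) ^ 2) / n := by
        field_simp
        rw [sq_sqrt hn.le]
        ring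

end SensingMatrix

lemma ofReal_one_sub_sum_le_measure_forall_abs_le {Ω ι : Type*} [MeasurableSpace Ω] [Fintype ι]
    (P : Measure Ω) [IsProbabilityMeasure P] (Z : ι → Ω → ℝ) (t : ℝ) :
    ENNReal.ofReal (1 - ∑ j, P.real {ω | t ≤ |Z j ω|}) ≤ P {ω | ∀ j, |Z j ω| ≤ t} := by
  refine ENNReal.ofReal_le_of_le_toReal ?_
  set E := {ω | ∀ j, |Z j ω| ≤ t}
  have h := measureReal_union_le (μ := P) E Eᶜ
  rw [Set.union_compl_self, probReal_univ] at h
  have hEc : Eᶜ ⊆ ⋃ j, {ω | t ≤ |Z j ω|} := fun ω hω ↦ by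
    obtain ⟨j, hj⟩ := not_forall.mp hω
    exact Set.mem_iUnion.mpr ⟨j, (not_le.mp hj).le⟩
  have := (measureReal_mono (μ := P) hEc).trans (measureReal_iUnion_fintype_le _)
  rw [← measureReal_def]
  linarith

lemma sub_one_mul_two_mul_exp_neg_two_mul_log_le {p : ℝ} (hp : 1 < p) :
    (p - 1) * (2 * exp (-(2 * log p))) ≤ 2 / (p - 1) := by
  have hp0 : 0 < p - 1 := sub_pos.mpr hp
  rw [← log_rpow (by linarith), ← log_inv, exp_log (by positivity), rpow_two,
    le_div_iff₀ hp0]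
  calc (p - 1) * (2 * (p ^ 2)⁻¹) * (p - 1) = 2 * ((p - 1) ^ 2 / p ^ 2) := by ring
    _ ≤ 2 * 1 := by gcongr; rw [div_le_one (by positivity)]; nlinarith
    _ = 2 := mul_one 2

/-- With `y_i` independent Poisson with means `T(Af*)_i`, `T > 2n log p`,
the sensing-matrix construction and upper RIP in force, and `f* = Dθ*` nonnegative with unit
`ℓ₁`-norm, with probability at least `1 − 2/(p−1)` one has
`‖(2n/T)(y − TADθ*)ᵀ A D̄‖_∞ ≤ √(32 M log p / T)` where `M = (1+δ)/(4(a_u−a_ℓ)²)`. -/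
theorem lasso_tuning_parameter_bound
    {Ω : Type*} [MeasurableSpace Ω] (P : Measure Ω) [IsProbabilityMeasure P]
    (n p : ℕ) (hn : 0 < n) (hp : 2 ≤ p)
    (T : ℝ) (hT : 2 * n * Real.log p < T)
    (aℓ au : ℝ) (hau : aℓ < au)
    (Atil A : Matrix (Fin n) (Fin p) ℝ)
    (hAtil : ∀ i j, Atil i j ∈ Set.Icc (aℓ / Real.sqrt n) (au / Real.sqrt n))
    (hA : A = (2 * (au - aℓ) * Real.sqrt n)⁻¹ •
      (Atil + Matrix.of fun _ _ => (au - 2 * aℓ) / Real.sqrt n))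
    (D : Matrix (Fin p) (Fin p) ℝ) (hD : D.transpose * D = 1)
    (hD1 : ∀ i, D i ⟨0, by omega⟩ = 1 / Real.sqrt p)
    (K : ℕ) (hK : 1 ≤ K) (δ : ℝ) (hδ : 0 < δ)
    (hRIP : ∀ u : Fin p → ℝ, (Finset.univ.filter fun j => u j ≠ 0).card ≤ 2 * K →
      ∑ i, (Atil.mulVec (D.mulVec u) i) ^ 2 ≤ (1 + δ) * ∑ j, (u j) ^ 2)
    (fstar : Fin p → ℝ) (hfpos : ∀ j, 0 ≤ fstar j) (hf1 : ∑ j, |fstar j| = 1)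
    (y : Fin n → Ω → ℕ)
    (hmeas : ∀ i, Measurable (y i))
    (hlaw : ∀ i, Measure.map (y i) P = poissonMeasure (T * A.mulVec fstar i).toNNReal)
    (hindep : iIndepFun y P) :
    ENNReal.ofReal (1 - 2 / ((p : ℝ) - 1)) ≤
      P {ω | ∀ j : Fin (p - 1),
        |(2 * n / T) * ∑ i, ((y i ω : ℝ) - T * A.mulVec fstar i) * (A * D) i (finShift j)| ≤
          Real.sqrt (32 * ((1 + δ) / (4 * (au - aℓ) ^ 2)) * Real.log p / T)} := by
  have hn' : (0 : ℝ) < n := Nat.cast_pos.mpr hn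
  have hp' : (2 : ℝ) ≤ p := by exact_mod_cast hp
  have hlog : 0 ≤ Real.log p := log_nonneg (by linarith)
  have hT0 : 0 < T := (by positivity : 0 ≤ 2 * n * Real.log p).trans_lt hT
  have hM : 0 < (1 + δ) / (4 * (au - aℓ) ^ 2) :=
    div_pos (by linarith) (by have := sub_pos.mpr hau; positivity)
  have hf : ∑ j, fstar j = 1 := by simpa only [abs_of_nonneg (hfpos _)] using hf1
  have hμ : ∀ i, A.mulVec fstar i ∈ Set.Icc 0 (1 / (n : ℝ)) := fun i ↦
    have h := mulVec_mem_Icc_of_mem_Icc (sensing_apply_mem_Icc hn' hau hAtil hA) hfpos hf i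
    ⟨(by positivity : (0 : ℝ) ≤ 1 / (2 * n)).trans h.1, h.2⟩
  have htail := fun j : Fin (p - 1) ↦
    measureReal_le_abs_scaled_residual_le hn hT0 hlog hT.le hM hμ
      (sum_sq_sensing_mul_apply_le hn' hau hA hK hRIP
        (sum_apply_eq_zero_of_transpose_mul_self_eq_one hD (by positivity) hD1
          (j := finShift j) (Fin.ne_of_val_ne (Nat.succ_ne_zero j)))) hmeas hlaw hindep
  refine (ENNReal.ofReal_le_ofReal ?_).trans (ofReal_one_sub_sum_le_measure_forall_abs_le P _ _)
  calc 1 - 2 / ((p : ℝ) - 1) ≤ 1 - ((p : ℝ) - 1) * (2 * exp (-(2 * Real.log p))) := by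
        linarith [sub_one_mul_two_mul_exp_neg_two_mul_log_le (by linarith : (1 : ℝ) < p)]
    _ = 1 - ∑ _j : Fin (p - 1), 2 * exp (-(2 * Real.log p)) := by
        rw [Finset.sum_const, Finset.card_univ, Fintype.card_fin, nsmul_eq_mul,
          Nat.cast_sub (by omega), Nat.cast_one]
    _ ≤ _ := sub_le_sub_left (Finset.sum_le_sum fun j _ ↦ htail j) 1
end

section
/- For integers p ≥ 2 and 1 ≤ k ≤ p−1, let H_k = {β ∈ {−1,0,+1}^{p−1} : ‖β‖₀ = k}. There exists a subset H̃_k ⊆ H_k with cardinality |H̃_k| ≥ exp((k/2)·log((p − k/2 − 1)/k)) such that the Hamming distance ρ_H(β, β′) = |{j : β_j ≠ β′_j}| is at least k/2 for every pair of distinct β, β′ ∈ H̃_k. -/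
/-!
Take all of `H_k` (the Hamming sphere of radius `k` about `0` in `{-1, 0, 1}^n`, `n = p - 1`, of
size `C(n, k) 2^k`) and a maximal subset `H` of it whose points are pairwise at distance
`> r = ⌊(k - 1) / 2⌋`. By maximality the `r`-balls about `H` cover `H_k`, so
`|H| ≥ C(n, k) 2^k / V` with `V = ∑_{d ≤ r} C(n, d) 2^d` the ball volume (Gilbert–Varshamov).
Writing `C(n, k) 2^k = C(n, r) 2^r ∏_{r ≤ j < k} 2 (n - j) / (j + 1)`, every factor is at least
`x = (n - k/2) / k`, and those with `j < 3k/4` are at least `2x`; the resulting power of `2`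
absorbs the `r + 1` terms of `V`, leaving `|H| ≥ x^(k - r) ≥ x^(k/2)` when `x > 1`.
-/

open Finset

section HammingSphere
variable {ι β : Type*} [Fintype ι] [DecidableEq ι] [DecidableEq β]

theorem card_filter_hammingDist_eq (A : Finset β) {h : ι → β} (hh : ∀ i, h i ∈ A) (d : ℕ) :
    #{g ∈ Fintype.piFinset (fun _ : ι => A) | hammingDist g h = d}
      = (Fintype.card ι).choose d * (#A - 1) ^ d := by
  rw [card_eq_sum_card_fiberwise (f := fun g : ι → β => ({i | g i ≠ h i} : Finset ι))
    (t := powersetCard d (univ : Finset ι))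
    (fun g hg => by simpa [hammingDist] using (mem_filter.1 hg).2)]
  have fiber : ∀ D ∈ powersetCard d (univ : Finset ι),
      {g ∈ {g ∈ Fintype.piFinset (fun _ : ι => A) | hammingDist g h = d} |
          ({i | g i ≠ h i} : Finset ι) = D}
        = Fintype.piFinset fun i => if i ∈ D then A.erase (h i) else {h i} := by
    intro D hD
    rw [mem_powersetCard] at hD
    ext g
    simp only [mem_filter, Fintype.mem_piFinset, hammingDist]
    constructor
    · rintro ⟨⟨hA, -⟩, rfl⟩ i
      by_cases hi : g i = h i <;> simp [hi, hA]
    · intro hg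
      have hD' : ({i | g i ≠ h i} : Finset ι) = D := by
        ext i
        have := hg i
        by_cases hi : i ∈ D <;> simp_all
      refine ⟨⟨fun i => ?_, by rw [hD', hD.2]⟩, hD'⟩
      have := hg i
      split_ifs at this <;> simp_all
  rw [sum_congr rfl fun D hD => by rw [fiber D hD]]
  simp only [Fintype.card_piFinset, apply_ite card, card_erase_of_mem (hh _), card_singleton]
  rw [sum_congr rfl fun D hD => by
    rw [prod_ite_mem, univ_inter, prod_const, (mem_powersetCard.1 hD).2]]
  simp

theorem card_filter_hammingDist_le (A : Finset β) {h : ι → β} (hh : ∀ i, h i ∈ A) (r : ℕ) :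
    #{g ∈ Fintype.piFinset (fun _ : ι => A) | hammingDist g h ≤ r}
      = ∑ d ∈ range (r + 1), (Fintype.card ι).choose d * (#A - 1) ^ d := by
  rw [card_eq_sum_card_fiberwise (f := fun g : ι → β => hammingDist g h) (t := range (r + 1))
    (fun g hg => mem_range_succ_iff.2 (mem_filter.1 hg).2)]
  refine sum_congr rfl fun d hd => ?_
  rw [← card_filter_hammingDist_eq A hh, filter_filter]
  congr 1
  refine filter_congr fun g _ => ?_
  constructor
  · exact fun h => h.2
  · rintro rfl; exact ⟨mem_range_succ_iff.1 hd, rfl⟩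

end HammingSphere

section HammingPacking
variable {ι : Type*} {β : ι → Type*} [Fintype ι] [∀ i, DecidableEq (β i)]

theorem exists_separated_subset_covering (S : Finset (∀ i, β i)) (r : ℕ) :
    ∃ H ⊆ S, (∀ x ∈ H, ∀ y ∈ H, x ≠ y → r < hammingDist x y) ∧
      ∀ g ∈ S, ∃ h ∈ H, hammingDist g h ≤ r := by
  let separated : Finset (Finset (∀ i, β i)) :=
    {H ∈ S.powerset | ∀ x ∈ H, ∀ y ∈ H, x ≠ y → r < hammingDist x y}
  obtain ⟨H, hH, hmax⟩ := separated.exists_max_image card ⟨∅, by simp [separated]⟩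
  obtain ⟨hHS, hsep⟩ := mem_filter.1 hH
  refine ⟨H, mem_powerset.1 hHS, hsep, fun g hg => ?_⟩
  by_contra! hfar
  have hgH : g ∉ H := fun hgH => by simpa using hfar g hgH
  have hinsert : insert g H ∈ separated := by
    refine mem_filter.2 ⟨mem_powerset.2 (insert_subset hg (mem_powerset.1 hHS)), ?_⟩
    simp only [mem_insert]
    rintro x (rfl | hx) y (rfl | hy) hxy
    · exact absurd rfl hxy
    · exact hfar y hy
    · exact hammingDist_comm y x ▸ hfar x hx
    · exact hsep x hx y hy hxy
  simpa [card_insert_of_notMem hgH] using hmax _ hinsert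

theorem exists_separated_subset_card_le_mul (S : Finset (∀ i, β i)) (r V : ℕ)
    (hV : ∀ h ∈ S, #{g ∈ S | hammingDist g h ≤ r} ≤ V) :
    ∃ H ⊆ S, (∀ x ∈ H, ∀ y ∈ H, x ≠ y → r < hammingDist x y) ∧ #S ≤ #H * V := by
  obtain ⟨H, hHS, hsep, hcover⟩ := exists_separated_subset_covering S r
  refine ⟨H, hHS, hsep, ?_⟩
  calc #S ≤ #(H.biUnion fun h => {g ∈ S | hammingDist g h ≤ r}) := card_le_card fun g hg => by
        obtain ⟨h, hh, hgh⟩ := hcover g hg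
        exact mem_biUnion.2 ⟨h, hh, mem_filter.2 ⟨hg, hgh⟩⟩
    _ ≤ ∑ h ∈ H, #{g ∈ S | hammingDist g h ≤ r} := card_biUnion_le
    _ ≤ ∑ _h ∈ H, V := sum_le_sum fun h hh => hV h (hHS hh)
    _ = #H * V := by rw [sum_const, smul_eq_mul]

end HammingPacking

theorem Nat.choose_le_choose_right_of_le_half {n a b : ℕ} (hab : a ≤ b) (hb : b ≤ n / 2) :
    n.choose a ≤ n.choose b := by
  induction b, hab using Nat.le_induction with
  | base => rfl
  | succ b _ ih => exact (ih (by omega)).trans (Nat.choose_le_succ_of_lt_half_left (by omega))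

theorem Nat.choose_mul_prod_Ico (n : ℕ) {r k : ℕ} (hrk : r ≤ k) :
    (n.choose r : ℝ) * ∏ j ∈ Ico r k, ((n : ℝ) - j) / (j + 1) = n.choose k := by
  induction k, hrk using Nat.le_induction with
  | base => simp
  | succ k hrk ih =>
    rw [prod_Ico_succ_top hrk, ← mul_assoc, ih]
    rcases le_or_gt k n with hkn | hnk
    · have h := congrArg (Nat.cast (R := ℝ)) (Nat.choose_succ_right_eq n k)
      push_cast [Nat.cast_sub hkn] at h
      field_simp
      linarith
    · simp [Nat.choose_eq_zero_of_lt hnk, Nat.choose_eq_zero_of_lt (hnk.trans k.lt_succ_self)]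

section SparseRatio
variable {n k j : ℕ}

theorem sub_half_div_nonneg (hkn : k ≤ n) : 0 ≤ ((n : ℝ) - k / 2) / k := by
  have : (k : ℝ) ≤ n := by exact_mod_cast hkn
  exact div_nonneg (by linarith) k.cast_nonneg

theorem sub_half_div_le_two_mul_sub_div (hj : j < k) (hnk : 3 * k + 1 ≤ 2 * n) :
    ((n : ℝ) - k / 2) / k ≤ 2 * ((n : ℝ) - j) / (j + 1) := by
  have hj' : (j : ℝ) + 1 ≤ k := by exact_mod_cast hj
  have hnk' : (3 : ℝ) * k + 1 ≤ 2 * n := by exact_mod_cast hnk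
  have hk : (0 : ℝ) < k := by linarith [(j.cast_nonneg : (0 : ℝ) ≤ j)]
  rw [div_le_div_iff₀ hk (by positivity)]
  nlinarith [mul_nonneg (by linarith : (0 : ℝ) ≤ k - (j + 1))
    (by linarith : (0 : ℝ) ≤ 2 * n - 3 * k - 1)]

theorem two_mul_sub_half_div_le_two_mul_sub_div (hj : 4 * j + 2 ≤ 3 * k)
    (hnk : 3 * k + 1 ≤ 2 * n) :
    2 * (((n : ℝ) - k / 2) / k) ≤ 2 * ((n : ℝ) - j) / (j + 1) := by
  have hj' : (4 : ℝ) * j + 2 ≤ 3 * k := by exact_mod_cast hj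
  have hjk : (j : ℝ) + 1 ≤ k := by exact_mod_cast (by omega : j + 1 ≤ k)
  have hnk' : (3 : ℝ) * k + 1 ≤ 2 * n := by exact_mod_cast hnk
  have hk : (0 : ℝ) < k := by linarith [(j.cast_nonneg : (0 : ℝ) ≤ j)]
  rw [mul_div_assoc', div_le_div_iff₀ hk (by positivity)]
  nlinarith [mul_nonneg (by linarith : (0 : ℝ) ≤ k - (j + 1))
      (by linarith : (0 : ℝ) ≤ 2 * n - 3 * k - 1),
    mul_nonneg hk.le (by linarith : (0 : ℝ) ≤ 3 * k - 4 * j - 2)]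

theorem two_pow_mul_pow_le_prod (hk : 1 ≤ k) (hnk : 3 * k + 1 ≤ 2 * n) :
    (2 : ℝ) ^ ((3 * k - 2) / 4 + 1 - (k - 1) / 2) * (((n : ℝ) - k / 2) / k) ^ (k - (k - 1) / 2)
      ≤ ∏ j ∈ Ico ((k - 1) / 2) k, 2 * ((n : ℝ) - j) / (j + 1) := by
  set r := (k - 1) / 2
  set e := (3 * k - 2) / 4
  set x := ((n : ℝ) - k / 2) / k
  have hx : 0 ≤ x := sub_half_div_nonneg (by omega)
  have hsmall : (2 * x) ^ (e + 1 - r) ≤ ∏ j ∈ Ico r (e + 1), 2 * ((n : ℝ) - j) / (j + 1) := by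
    rw [← Nat.card_Ico, ← prod_const]
    exact prod_le_prod (fun _ _ => by positivity) fun j hj =>
      two_mul_sub_half_div_le_two_mul_sub_div (by simp at hj; omega) hnk
  have hlarge : x ^ (k - (e + 1)) ≤ ∏ j ∈ Ico (e + 1) k, 2 * ((n : ℝ) - j) / (j + 1) := by
    rw [← Nat.card_Ico, ← prod_const]
    exact prod_le_prod (fun _ _ => hx) fun j hj =>
      sub_half_div_le_two_mul_sub_div (mem_Ico.1 hj).2 hnk
  rw [← prod_Ico_consecutive _ (by omega : r ≤ e + 1) (by omega : e + 1 ≤ k)]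
  calc (2 : ℝ) ^ (e + 1 - r) * x ^ (k - r) = (2 * x) ^ (e + 1 - r) * x ^ (k - (e + 1)) := by
        rw [mul_pow, mul_assoc, ← pow_add]; congr 3; omega
    _ ≤ _ := mul_le_mul hsmall hlarge (by positivity) ((by positivity : (0 : ℝ) ≤ _).trans hsmall)

theorem pow_mul_sum_choose_le (hk : 1 ≤ k) (hnk : 3 * k + 1 ≤ 2 * n) :
    (((n : ℝ) - k / 2) / k) ^ (k - (k - 1) / 2) *
        ∑ d ∈ range ((k - 1) / 2 + 1), (n.choose d * 2 ^ d : ℝ)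
      ≤ n.choose k * 2 ^ k := by
  set r := (k - 1) / 2
  set e := (3 * k - 2) / 4
  set x := ((n : ℝ) - k / 2) / k
  have hsum :
      ∑ d ∈ range (r + 1), (n.choose d * 2 ^ d : ℝ) ≤ (r + 1) * (n.choose r * 2 ^ r) := by
    have := sum_le_card_nsmul (range (r + 1)) (fun d => n.choose d * 2 ^ d) (n.choose r * 2 ^ r)
      fun d hd => Nat.mul_le_mul (Nat.choose_le_choose_right_of_le_half (by simp at hd; omega)
        (by omega)) (Nat.pow_le_pow_right two_pos (by simp at hd; omega))
    simp only [card_range, smul_eq_mul] at this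
    exact_mod_cast this
  have hprod : (n.choose r * 2 ^ r : ℝ) * ∏ j ∈ Ico r k, 2 * ((n : ℝ) - j) / (j + 1)
      = n.choose k * 2 ^ k := by
    simp_rw [mul_div_assoc, prod_mul_distrib, prod_const, Nat.card_Ico]
    have hrk : r ≤ k := by omega
    rw [← Nat.choose_mul_prod_Ico n hrk, ← pow_mul_pow_sub (2 : ℝ) hrk]
    ring
  have hr : (r + 1 : ℝ) ≤ 2 ^ (e + 1 - r) := by
    have := (e - r).lt_two_pow_self
    have : r + 1 ≤ 2 ^ (e + 1 - r) := by
      rw [show e + 1 - r = e - r + 1 by omega, pow_succ]; omega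
    exact_mod_cast this
  have hx : 0 ≤ x := sub_half_div_nonneg (by omega)
  calc x ^ (k - r) * ∑ d ∈ range (r + 1), (n.choose d * 2 ^ d : ℝ)
      ≤ x ^ (k - r) * ((r + 1) * (n.choose r * 2 ^ r)) := by gcongr
    _ ≤ x ^ (k - r) * (2 ^ (e + 1 - r) * (n.choose r * 2 ^ r)) := by gcongr
    _ = (n.choose r * 2 ^ r) * (2 ^ (e + 1 - r) * x ^ (k - r)) := by ring
    _ ≤ (n.choose r * 2 ^ r) * ∏ j ∈ Ico r k, 2 * ((n : ℝ) - j) / (j + 1) := by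
        gcongr; exact two_pow_mul_pow_le_prod hk hnk
    _ = n.choose k * 2 ^ k := hprod

theorem exp_half_mul_log_le {N : ℕ} (hkn : k ≤ n)
    (h : n.choose k * 2 ^ k ≤ N * ∑ d ∈ range ((k - 1) / 2 + 1), n.choose d * 2 ^ d) :
    Real.exp (((k : ℝ) / 2) * Real.log (((n : ℝ) - (k : ℝ) / 2) / k)) ≤ N := by
  set x := ((n : ℝ) - k / 2) / k
  set V := ∑ d ∈ range ((k - 1) / 2 + 1), n.choose d * 2 ^ d
  have hV : 0 < V := sum_pos' (fun _ _ => Nat.zero_le _) ⟨0, by simp, by simp⟩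
  have hN : 1 ≤ N := Nat.one_le_iff_ne_zero.2 fun hN0 => by
    simp [hN0, (Nat.choose_pos hkn).ne'] at h
  rcases le_or_gt x 1 with hx1 | hx1
  · calc Real.exp ((k / 2 : ℝ) * Real.log x) ≤ Real.exp 0 := Real.exp_le_exp.2
          (mul_nonpos_of_nonneg_of_nonpos (by positivity)
            (Real.log_nonpos (sub_half_div_nonneg hkn) hx1))
      _ ≤ N := by simpa using hN
  -- for `k = 0`, `x = n / 0 = 0`
  have hk : 1 ≤ k := Nat.one_le_iff_ne_zero.2 fun hk0 => by simp [x, hk0] at hx1; linarith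
  have hnk : 3 * k + 1 ≤ 2 * n := by
    have hk' : (0 : ℝ) < k := by exact_mod_cast hk
    have : (3 * k : ℝ) < 2 * n := by
      rw [lt_div_iff₀ hk'] at hx1; linarith
    exact_mod_cast this
  have hexp : Real.exp ((k / 2 : ℝ) * Real.log x) ≤ x ^ (k - (k - 1) / 2) := by
    rw [mul_comm, ← Real.rpow_def_of_pos (by linarith), ← Real.rpow_natCast]
    refine Real.rpow_le_rpow_of_exponent_le hx1.le ?_
    rw [div_le_iff₀ two_pos]
    exact_mod_cast (by omega : k ≤ (k - (k - 1) / 2) * 2)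
  have hpow : x ^ (k - (k - 1) / 2) * V ≤ N * V := by
    have := pow_mul_sum_choose_le hk hnk
    simp only [V]
    push_cast
    exact this.trans (by exact_mod_cast h)
  exact hexp.trans (le_of_mul_le_mul_right hpow (by exact_mod_cast hV))

end SparseRatio

theorem sparse_hypercube_packing_general
    (p k : ℕ) (hp : 2 ≤ p) (hk : k ≤ p - 1) :
    ∃ H : Finset (Fin (p - 1) → ℤ),
      (∀ β ∈ H, (∀ j, β j = -1 ∨ β j = 0 ∨ β j = 1) ∧
        (Finset.univ.filter fun j => β j ≠ 0).card = k) ∧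
      Real.exp (((k : ℝ) / 2) * Real.log (((p : ℝ) - (k : ℝ) / 2 - 1) / k)) ≤ H.card ∧
      ∀ β ∈ H, ∀ β' ∈ H, β ≠ β' → (k : ℝ) / 2 ≤ (hammingDist β β' : ℝ) := by
  set n := p - 1
  have hpn : (p : ℝ) - k / 2 - 1 = n - k / 2 := by
    rw [Nat.cast_sub (by omega)]; push_cast; ring
  rw [hpn]
  let A : Finset ℤ := {-1, 0, 1}
  let S := {β ∈ Fintype.piFinset fun _ : Fin n => A | hammingDist β 0 = k}
  have hS : #S = n.choose k * 2 ^ k := by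
    simpa [A, S] using card_filter_hammingDist_eq A (h := (0 : Fin n → ℤ)) (by simp [A]) k
  have hball (h : Fin n → ℤ) (hh : h ∈ S) : #{g ∈ S | hammingDist g h ≤ (k - 1) / 2}
      ≤ ∑ d ∈ range ((k - 1) / 2 + 1), n.choose d * 2 ^ d := by
    have hhA : ∀ i, h i ∈ A := Fintype.mem_piFinset.1 (mem_filter.1 hh).1
    calc #{g ∈ S | hammingDist g h ≤ (k - 1) / 2}
        ≤ #{g ∈ Fintype.piFinset fun _ : Fin n => A | hammingDist g h ≤ (k - 1) / 2} :=
          card_le_card (filter_subset_filter _ (filter_subset _ _))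
      _ = _ := by simpa [A] using card_filter_hammingDist_le A hhA ((k - 1) / 2)
  obtain ⟨H, hHS, hsep, hcard⟩ := exists_separated_subset_card_le_mul S _ _ hball
  refine ⟨H, fun β hβ => ?_, exp_half_mul_log_le hk (hS ▸ hcard), fun β hβ β' hβ' hne => ?_⟩
  · obtain ⟨hβA, hβk⟩ := mem_filter.1 (hHS hβ)
    simp only [Fintype.mem_piFinset, A, mem_insert, mem_singleton] at hβA
    exact ⟨hβA, hβk⟩
  · have := hsep β hβ β' hβ' hne
    rw [div_le_iff₀ two_pos]
    exact_mod_cast (by omega : k ≤ hammingDist β β' * 2)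

/-- (Varshamov–Gilbert type construction.) For `p ≥ 2` and
`1 ≤ k ≤ p−1`, there is a subset `H̃_k` of `{β ∈ {−1,0,1}^{p−1} : ‖β‖₀ = k}` of
cardinality at least `exp((k/2) log((p − k/2 − 1)/k))` whose distinct elements are at
pairwise Hamming distance at least `k/2`. -/
theorem sparse_hypercube_packing
    (p k : ℕ) (hp : 2 ≤ p) (hk1 : 1 ≤ k) (hk : k ≤ p - 1) :
    ∃ H : Finset (Fin (p - 1) → ℤ),
      (∀ β ∈ H, (∀ j, β j = -1 ∨ β j = 0 ∨ β j = 1) ∧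
        (Finset.univ.filter fun j => β j ≠ 0).card = k) ∧
      Real.exp (((k : ℝ) / 2) * Real.log (((p : ℝ) - (k : ℝ) / 2 - 1) / k)) ≤ H.card ∧
      ∀ β ∈ H, ∀ β' ∈ H, β ≠ β' → (k : ℝ) / 2 ≤ (hammingDist β β' : ℝ) :=
  sparse_hypercube_packing_general p k hp hk
end

section
/- Let D = [d₁, …, d_p] ∈ ℝ^{p×p} be an orthonormal matrix with d₁ = p^{−1/2}·1_{p×1} and D̄ = [d₂, …, d_p]. For 1 ≤ k ≤ p−1, let H̃_k ⊆ {−1,0,+1}^{p−1} be a set of vectors each with exactly k nonzero entries and pairwise Hamming distance at least k/2, with |H̃_k| ≥ exp((k/2)log((p − k/2 − 1)/k)). For 0 < α_k ≤ 1/(p·λ_k(D̄)), where λ_k(D̄) is the k-sparse localization quantity of D̄, define H_{k,α_k} = {θ ∈ ℝ^p : θ = [1/√p, α_k β^⊤]^⊤, β ∈ H̃_k} and η_{α_k}² = (k/2)α_k². Then: (1) for any two distinct θ, θ′ ∈ H_{k,α_k}, η_{α_k}² ≤ ‖θ − θ′‖₂² ≤ 8η_{α_k}²; (2) for every θ ∈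 H_{k,α_k}, the vector f = Dθ satisfies f_i ≥ 0 for all i ∈ {1,…,p} and ‖f‖₁ = 1; (3) |H_{k,α_k}| ≥ exp((k/2)log((p − k/2 − 1)/k)). -/
open scoped BigOperators
open Finset

/-- The `k`-sparse localization quantity `λ_k(X) = max ‖Xv‖_∞` over
`v ∈ {−1,0,1}^m` with `‖v‖₀ = k`. -/
noncomputable def sparseLoc {p m : ℕ} (X : Matrix (Fin p) (Fin m) ℝ) (k : ℕ) : ℝ :=
  sSup {t | ∃ v : Fin m → ℝ, (∀ j, v j = -1 ∨ v j = 0 ∨ v j = 1) ∧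
    (Finset.univ.filter fun j => v j ≠ 0).card = k ∧ t = ⨆ i, |X.mulVec v i|}

/-- The vector `θ = [1/√p, α β⊤]⊤ ∈ ℝ^p` built from `β ∈ ℝ^{p−1}`. -/
noncomputable def packVec (p : ℕ) (α : ℝ) (β : Fin (p - 1) → ℝ) : Fin p → ℝ :=
  fun i => if h : i.val = 0 then 1 / Real.sqrt p
    else α * β ⟨i.val - 1, by have := i.isLt; omega⟩

lemma sum_split {p : ℕ} (hp : 0 < p) (f : Fin p → ℝ) :
    ∑ i, f i = f ⟨0, hp⟩ + ∑ j : Fin (p-1), f (finShift j) := by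
  have h : p - 1 + 1 = p := by omega
  rw [← Fintype.sum_equiv (finCongr h) (fun i => f (finCongr h i)) f (fun i => rfl)]
  rw [Fin.sum_univ_succ]
  have h0 : (finCongr h) (0 : Fin (p-1+1)) = ⟨0, hp⟩ := Fin.ext rfl
  have hs : ∀ j : Fin (p-1), (finCongr h) j.succ = finShift j := fun j => Fin.ext rfl
  rw [h0]
  simp only [hs]

lemma packVec_zero {p : ℕ} (hp : 0 < p) (α : ℝ) (β : Fin (p-1) → ℝ) :
    packVec p α β ⟨0, hp⟩ = 1 / Real.sqrt p := by simp [packVec]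

lemma packVec_shift {p : ℕ} (α : ℝ) (β : Fin (p-1) → ℝ) (j : Fin (p-1)) :
    packVec p α β (finShift j) = α * β j := by
  simp [packVec, finShift]

/-- Properties of the packing set `H_{k,α_k}`:
(1) `η² ≤ ‖θ − θ′‖₂² ≤ 8η²` with `η² = (k/2)α²` for distinct elements;
(2) `f = Dθ` is entrywise nonnegative with `‖f‖₁ = 1`;
(3) the packing set has at least `exp((k/2) log((p − k/2 − 1)/k))` elements. -/
theorem packing_set_properties
    (p k : ℕ) (hp : 2 ≤ p) (hk1 : 1 ≤ k) (hk : k ≤ p - 1)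
    (D : Matrix (Fin p) (Fin p) ℝ) (hD : D.transpose * D = 1)
    (hD1 : ∀ i, D i ⟨0, by omega⟩ = 1 / Real.sqrt p)
    (Htil : Finset (Fin (p - 1) → ℝ))
    (hHval : ∀ β ∈ Htil, ∀ j, β j = -1 ∨ β j = 0 ∨ β j = 1)
    (hHsupp : ∀ β ∈ Htil, (Finset.univ.filter fun j => β j ≠ 0).card = k)
    (hHdist : ∀ β ∈ Htil, ∀ β' ∈ Htil, β ≠ β' →
      (k : ℝ) / 2 ≤ (hammingDist β β' : ℝ))
    (hHcard : Real.exp (((k : ℝ) / 2) * Real.log (((p : ℝ) - (k : ℝ) / 2 - 1) / k)) ≤ Htil.card)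
    (α : ℝ) (hα : 0 < α)
    (hαlam : α ≤ 1 / (p * sparseLoc (Matrix.of fun i (j : Fin (p - 1)) => D i (finShift j)) k)) :
    (∀ β ∈ Htil, ∀ β' ∈ Htil, β ≠ β' →
      ((k : ℝ) / 2) * α ^ 2 ≤ ∑ i, (packVec p α β i - packVec p α β' i) ^ 2 ∧
      ∑ i, (packVec p α β i - packVec p α β' i) ^ 2 ≤ 8 * (((k : ℝ) / 2) * α ^ 2)) ∧
    (∀ β ∈ Htil, (∀ i, 0 ≤ D.mulVec (packVec p α β) i) ∧
      ∑ i, |D.mulVec (packVec p α β) i| = 1) ∧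
    (Real.exp (((k : ℝ) / 2) * Real.log (((p : ℝ) - (k : ℝ) / 2 - 1) / k)) ≤
      (Htil.image (packVec p α)).card) := by
  have hppos : 0 < p := by omega
  have hp0 : (0:ℝ) < p := by exact_mod_cast hppos
  have hsq : Real.sqrt p * Real.sqrt p = (p:ℝ) := Real.mul_self_sqrt (le_of_lt hp0)
  have hsqpos : 0 < Real.sqrt p := Real.sqrt_pos.mpr hp0
  set X : Matrix (Fin p) (Fin (p-1)) ℝ :=
    Matrix.of fun i (j : Fin (p - 1)) => D i (finShift j) with hX
  set lam := sparseLoc X k with hlamdef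
  -- squares of entries sum to one along columns
  have hDsq : ∀ j : Fin p, ∑ i, D i j * D i j = 1 := by
    intro j
    have h := congrFun (congrFun hD j) j
    simpa [Matrix.mul_apply, Matrix.transpose_apply, Matrix.one_apply] using h
  have hent : ∀ i j, |D i j| ≤ 1 := by
    intro i j
    have h1 : D i j * D i j ≤ 1 := by
      rw [← hDsq j]
      exact Finset.single_le_sum (f := fun i => D i j * D i j)
        (fun i _ => mul_self_nonneg _) (Finset.mem_univ i)
    nlinarith [abs_nonneg (D i j), abs_mul_abs_self (D i j)]
  have hD1' : ∀ i, D i ⟨0, hppos⟩ = 1 / Real.sqrt p := fun i => hD1 i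
  haveI : Nonempty (Fin p) := ⟨⟨0, hppos⟩⟩
  -- the defining set of sparseLoc is bounded above
  have hbdd : BddAbove {t | ∃ v : Fin (p-1) → ℝ, (∀ j, v j = -1 ∨ v j = 0 ∨ v j = 1) ∧
      (Finset.univ.filter fun j => v j ≠ 0).card = k ∧ t = ⨆ i, |X.mulVec v i|} := by
    refine ⟨p, ?_⟩
    rintro t ⟨v, hv, -, rfl⟩
    apply ciSup_le
    intro i
    calc |X.mulVec v i| ≤ ∑ j, |X i j * v j| := by
          simpa [Matrix.mulVec, dotProduct] using
            Finset.abs_sum_le_sum_abs (fun j => X i j * v j) Finset.univ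
      _ ≤ ∑ _j : Fin (p-1), (1:ℝ) := by
          apply Finset.sum_le_sum
          intro j _
          rw [abs_mul]
          have hvj : |v j| ≤ 1 := by rcases hv j with h|h|h <;> simp [h]
          calc |X i j| * |v j| ≤ 1 * 1 :=
                mul_le_mul (hent i (finShift j)) hvj (abs_nonneg _) zero_le_one
            _ = 1 := one_mul 1
      _ = ((p-1 : ℕ) : ℝ) := by simp
      _ ≤ (p : ℝ) := by exact_mod_cast Nat.sub_le p 1
  have habs : ∀ β ∈ Htil, ∀ i, |X.mulVec β i| ≤ lam := by
    intro β hβ i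
    have hmem : (⨆ i, |X.mulVec β i|) ∈ {t | ∃ v : Fin (p-1) → ℝ,
        (∀ j, v j = -1 ∨ v j = 0 ∨ v j = 1) ∧
        (Finset.univ.filter fun j => v j ≠ 0).card = k ∧ t = ⨆ i, |X.mulVec v i|} :=
      ⟨β, hHval β hβ, hHsupp β hβ, rfl⟩
    exact le_trans (le_ciSup (f := fun i => |X.mulVec β i|) (Set.Finite.bddAbove (Set.finite_range _)) i)
      (le_csSup hbdd hmem)
  have hHtne : Htil.Nonempty := by
    rw [← Finset.card_pos]
    by_contra h
    push_neg at h
    have h0 : Htil.card = 0 := by omega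
    rw [h0] at hHcard
    simpa using lt_of_lt_of_le (Real.exp_pos _) hHcard
  obtain ⟨β₀, hβ₀⟩ := hHtne
  have hlam0 : 0 ≤ lam := le_trans (abs_nonneg _) (habs β₀ hβ₀ ⟨0, hppos⟩)
  have hlampos : 0 < lam := by
    rcases hlam0.lt_or_eq with h | h
    · exact h
    · exfalso
      rw [← h] at hαlam
      simp at hαlam
      linarith
  have halam : α * lam ≤ 1 / (p:ℝ) := by
    have hpl : 0 < (p:ℝ) * lam := by positivity
    rw [le_div_iff₀ hpl] at hαlam
    rw [le_div_iff₀ hp0]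
    nlinarith
  -- column sums of D̄ are zero
  have hcol : ∀ j : Fin (p-1), ∑ i, D i (finShift j) = 0 := by
    intro j
    have h := congrFun (congrFun hD (finShift j)) (⟨0, hppos⟩ : Fin p)
    have hne0 : (finShift j) ≠ (⟨0, hppos⟩ : Fin p) := by
      simp [finShift, Fin.ext_iff]
    rw [Matrix.mul_apply] at h
    simp only [Matrix.transpose_apply, Matrix.one_apply, if_neg hne0] at h
    have h2 : (∑ i, D i (finShift j)) * (1 / Real.sqrt p) = 0 := by
      rw [Finset.sum_mul, ← h]
      exact Finset.sum_congr rfl fun i _ => by rw [hD1' i]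
    have hne1 : (1:ℝ) / Real.sqrt p ≠ 0 := by positivity
    exact (mul_eq_zero.mp h2).resolve_right hne1
  -- mulVec formula
  have hXmv : ∀ (β : Fin (p-1) → ℝ) (i : Fin p),
      X.mulVec β i = ∑ j, D i (finShift j) * β j := by
    intro β i
    simp [Matrix.mulVec, dotProduct, hX]
  have hmv : ∀ (β : Fin (p-1) → ℝ) (i : Fin p),
      D.mulVec (packVec p α β) i = 1/(p:ℝ) + α * (X.mulVec β i) := by
    intro β i
    have h1 : D.mulVec (packVec p α β) i = ∑ j, D i j * packVec p α β j := by
      simp [Matrix.mulVec, dotProduct]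
    rw [h1, sum_split hppos (fun j => D i j * packVec p α β j)]
    simp only [packVec_zero hppos, packVec_shift, hD1' i]
    have h2 : (1/Real.sqrt p) * (1/Real.sqrt p) = 1/(p:ℝ) := by
      rw [div_mul_div_comm, one_mul, hsq]
    rw [h2, hXmv β i, Finset.mul_sum]
    congr 1
    exact Finset.sum_congr rfl fun j _ => by ring
  -- sum of squares of a vector in Htil
  have hsq_self : ∀ γ ∈ Htil, ∑ j, (γ j)^2 = (k:ℝ) := by
    intro γ hγ
    have h1 : ∀ j : Fin (p-1), (γ j)^2 = if γ j ≠ 0 then (1:ℝ) else 0 := by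
      intro j; rcases hHval γ hγ j with h|h|h <;> simp [h]
    rw [Finset.sum_congr rfl (fun j _ => h1 j), Finset.sum_boole, hHsupp γ hγ]
  refine ⟨?_, ?_, ?_⟩
  · -- part 1: distance bounds
    intro β hβ β' hβ' hnee
    have hsum : ∑ i, (packVec p α β i - packVec p α β' i)^2
        = α^2 * ∑ j, (β j - β' j)^2 := by
      rw [sum_split hppos (fun i => (packVec p α β i - packVec p α β' i)^2)]
      simp only [packVec_zero hppos, packVec_shift, sub_self]
      rw [Finset.mul_sum]
      have h0 : (0:ℝ)^2 = 0 := by norm_num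
      rw [h0, zero_add]
      exact Finset.sum_congr rfl fun j _ => by ring
    have hh : ((hammingDist β β' : ℕ) : ℝ) ≤ ∑ j, (β j - β' j)^2 := by
      have h2 : ((Finset.univ.filter fun j => β j ≠ β' j).card : ℝ)
          ≤ ∑ j, (β j - β' j)^2 := by
        rw [← Finset.sum_boole]
        apply Finset.sum_le_sum
        intro j _
        by_cases hj : β j ≠ β' j
        · simp only [if_pos hj]
          rcases hHval β hβ j with h|h|h <;> rcases hHval β' hβ' j with h'|h'|h' <;>
            simp [h, h'] at hj ⊢ <;> norm_num
        · simp only [if_neg hj]; positivity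
      simpa [hammingDist] using h2
    have hlow : (k:ℝ)/2 ≤ ∑ j, (β j - β' j)^2 :=
      le_trans (hHdist β hβ β' hβ' hnee) hh
    have hup : ∑ j, (β j - β' j)^2 ≤ 4*(k:ℝ) := by
      calc ∑ j, (β j - β' j)^2 ≤ ∑ j, (2*(β j)^2 + 2*(β' j)^2) := by
            apply Finset.sum_le_sum
            intro j _
            nlinarith [sq_nonneg (β j + β' j)]
        _ = 2*(k:ℝ) + 2*(k:ℝ) := by
            rw [Finset.sum_add_distrib, ← Finset.mul_sum, ← Finset.mul_sum,
              hsq_self β hβ, hsq_self β' hβ']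
        _ = 4*(k:ℝ) := by ring
    constructor
    · rw [hsum]
      nlinarith [sq_nonneg α]
    · rw [hsum]
      nlinarith [sq_nonneg α]
  · -- part 2: nonnegativity and ℓ¹-norm one
    intro β hβ
    have hnn : ∀ i, 0 ≤ D.mulVec (packVec p α β) i := by
      intro i
      rw [hmv β i]
      have h1 := (abs_le.mp (habs β hβ i)).1
      have h2 : α * (-lam) ≤ α * X.mulVec β i := mul_le_mul_of_nonneg_left h1 hα.le
      rw [mul_neg] at h2
      linarith [halam]
    refine ⟨hnn, ?_⟩
    have h2 : ∑ i, |D.mulVec (packVec p α β) i| = ∑ i, D.mulVec (packVec p α β) i :=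
      Finset.sum_congr rfl fun i _ => abs_of_nonneg (hnn i)
    rw [h2]
    have h3 : ∑ i, D.mulVec (packVec p α β) i
        = ∑ i : Fin p, (1/(p:ℝ)) + α * ∑ i, X.mulVec β i := by
      rw [Finset.mul_sum, ← Finset.sum_add_distrib]
      exact Finset.sum_congr rfl fun i _ => hmv β i
    rw [h3]
    have h4 : ∑ i, X.mulVec β i = 0 := by
      rw [Finset.sum_congr rfl (fun i _ => hXmv β i), Finset.sum_comm]
      rw [Finset.sum_congr rfl (fun j (_ : j ∈ Finset.univ) => by
        rw [← Finset.sum_mul, hcol j, zero_mul])]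
      simp
    rw [h4, mul_zero, add_zero, Finset.sum_const, Finset.card_univ, Fintype.card_fin,
      nsmul_eq_mul]
    rw [mul_one_div, div_self (ne_of_gt hp0)]
  · -- part 3: cardinality
    have hinj : Function.Injective (packVec p α) := by
      intro β β' h
      funext j
      have hj := congrFun h (finShift j)
      rw [packVec_shift, packVec_shift] at hj
      exact mul_left_cancel₀ (ne_of_gt hα) hj
    rw [Finset.card_image_of_injective Htil hinj]
    exact hHcard
end

section
/- Let y₁, …, y_n be independent with y_i ~ Poisson(T·μ_i), where 0 ≤ μ_i ≤ 1/n for all i and T > 2n log p. Let w ∈ ℝ^n satisfy Σ_{i=1}^n w_i² ≤ M/n for a constant M > 0. Then for t = √(32 M log p / T), P( |Σ_{i=1}^n (y_i − Tμ_i)·(n w_i / T)| > t/2 ) ≤ 2·exp(−t²T/(16M)) = 2/p². -/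
/-!
A centred Poisson variable `Y - r` scaled by `c` has moment generating function
`exp (r * (exp (v * c) - 1 - v * c)) ≤ exp (r * (v * c) ^ 2)` as long as `|v * c| ≤ 1`.
By independence the weighted sum is then sub-Gaussian on that range of `v`, with variance
proxy `∑ r_i c_i ^ 2 ≤ M / T`, and a two-sided Chernoff bound at the optimal
`s = t T / (4 M)` gives `2 exp (-t² T / (16 M))`. The condition `T > 2 n log p` is
what keeps `|s c_i| ≤ 1`.
-/

open scoped NNReal Nat
open MeasureTheory ProbabilityTheory Real

namespace ProbabilityTheory

section PoissonMGF

lemma hasSum_poissonMeasure_exp_mul (r : ℝ≥0) (s : ℝ) :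
    HasSum (fun k : ℕ => exp (-r) * r ^ k / k ! * exp (s * k)) (exp (r * (exp s - 1))) := by
  have hterm : (fun k : ℕ => exp (-r) * r ^ k / k ! * exp (s * k))
      = fun k => exp (-r) * ((r * exp s) ^ k / k !) := by
    funext k
    rw [mul_pow, ← exp_nat_mul, mul_comm (k : ℝ) s]
    ring
  have hexp : HasSum (fun k : ℕ => ((r : ℝ) * exp s) ^ k / k !) (exp (r * exp s)) := by
    simpa only [← exp_eq_exp_ℝ] using NormedSpace.expSeries_div_hasSum_exp ((r : ℝ) * exp s)
  rw [hterm, mul_sub_one, sub_eq_neg_add, exp_add]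
  exact hexp.mul_left _

lemma integrable_exp_mul_poissonMeasure (r : ℝ≥0) (s : ℝ) :
    Integrable (fun k : ℕ => exp (s * k)) (poissonMeasure r) := by
  rw [integrable_poissonMeasure_iff]
  simpa only [norm_of_nonneg (exp_pos _).le] using (hasSum_poissonMeasure_exp_mul r s).summable

lemma mgf_natCast_poissonMeasure (r : ℝ≥0) (s : ℝ) :
    mgf (fun k : ℕ => (k : ℝ)) (poissonMeasure r) s = exp (r * (exp s - 1)) := by
  rw [mgf, integral_poissonMeasure]
  exact (hasSum_poissonMeasure_exp_mul r s).tsum_eq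

end PoissonMGF

section CenteredPoisson

variable {Ω : Type*} [MeasurableSpace Ω] {P : Measure Ω} {Y : Ω → ℕ} {r : ℝ≥0}

lemma integrable_exp_mul_of_map_eq_poissonMeasure (hY : Measurable Y)
    (hlaw : P.map Y = poissonMeasure r) (s : ℝ) :
    Integrable (fun ω => exp (s * Y ω)) P := by
  have h := integrable_exp_mul_poissonMeasure r s
  rw [← hlaw] at h
  exact (integrable_map_measure (by fun_prop) hY.aemeasurable).mp h

lemma mgf_of_map_eq_poissonMeasure (hY : Measurable Y) (hlaw : P.map Y = poissonMeasure r)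
    (s : ℝ) : mgf (fun ω => (Y ω : ℝ)) P s = exp (r * (exp s - 1)) := by
  rw [← mgf_natCast_poissonMeasure r s, ← hlaw, mgf_map hY.aemeasurable (by fun_prop)]
  rfl

lemma integrable_exp_mul_centered_poisson (hY : Measurable Y)
    (hlaw : P.map Y = poissonMeasure r) (c v : ℝ) :
    Integrable (fun ω => exp (v * (((Y ω : ℝ) - r) * c))) P := by
  refine ((integrable_exp_mul_of_map_eq_poissonMeasure hY hlaw (v * c)).const_mul
    (exp (-(v * r * c)))).congr (ae_of_all _ fun ω => ?_)
  simp only [← exp_add]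
  ring_nf

lemma mgf_centered_poisson (hY : Measurable Y) (hlaw : P.map Y = poissonMeasure r) (c v : ℝ) :
    mgf (fun ω => ((Y ω : ℝ) - r) * c) P v = exp (r * (exp (v * c) - 1 - v * c)) := by
  have hX : (fun ω => ((Y ω : ℝ) - r) * c) = fun ω => c * (Y ω : ℝ) + -(r * c) := by
    ext ω
    ring
  rw [hX, mgf_add_const, mgf_const_mul, mgf_of_map_eq_poissonMeasure hY hlaw,
    ← exp_add]
  ring_nf

lemma mgf_centered_poisson_le (hY : Measurable Y) (hlaw : P.map Y = poissonMeasure r)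
    {c v : ℝ} (hvc : |v * c| ≤ 1) :
    mgf (fun ω => ((Y ω : ℝ) - r) * c) P v ≤ exp (r * (v * c) ^ 2) := by
  rw [mgf_centered_poisson hY hlaw]
  gcongr
  exact (le_abs_self _).trans (abs_exp_sub_one_sub_id_le hvc)

end CenteredPoisson

section Chernoff

variable {Ω : Type*} [MeasurableSpace Ω] {P : Measure Ω} [IsFiniteMeasure P] {X : Ω → ℝ}

lemma measureReal_lt_abs_le_exp_mul_mgf (a : ℝ) {s : ℝ} (hs : 0 ≤ s)
    (hint : Integrable (fun ω => exp (s * X ω)) P)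
    (hint_neg : Integrable (fun ω => exp (-s * X ω)) P) :
    P.real {ω | a < |X ω|} ≤ exp (-s * a) * (mgf X P s + mgf X P (-s)) := by
  have hsub : {ω | a < |X ω|} ⊆ {ω | a ≤ X ω} ∪ {ω | X ω ≤ -a} := by
    intro ω (hω : a < |X ω|)
    rcases lt_abs.mp hω with h | h
    · exact Or.inl h.le
    · exact Or.inr (show X ω ≤ -a by linarith)
  have hlower := measure_le_le_exp_mul_mgf (-a) (neg_nonpos.mpr hs) hint_neg
  rw [neg_neg, mul_neg, ← neg_mul] at hlower
  calc P.real {ω | a < |X ω|}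
      ≤ P.real {ω | a ≤ X ω} + P.real {ω | X ω ≤ -a} :=
        (measureReal_mono hsub).trans (measureReal_union_le _ _)
    _ ≤ exp (-s * a) * mgf X P s + exp (-s * a) * mgf X P (-s) :=
        add_le_add (measure_ge_le_exp_mul_mgf a hs hint) hlower
    _ = exp (-s * a) * (mgf X P s + mgf X P (-s)) := (mul_add _ _ _).symm

end Chernoff

section PoissonSum

variable {Ω ι : Type*} [MeasurableSpace Ω] {P : Measure Ω} {y : ι → Ω → ℕ}
  {r : ι → ℝ≥0}

lemma iIndepFun_centered_poisson (c : ι → ℝ) (hindep : iIndepFun y P) :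
    iIndepFun (fun i ω => ((y i ω : ℝ) - r i) * c i) P :=
  hindep.comp (fun i (k : ℕ) => ((k : ℝ) - r i) * c i) fun _ => measurable_from_top

variable [Fintype ι]

lemma integrable_exp_mul_sum_centered_poisson (c : ι → ℝ) (hmeas : ∀ i, Measurable (y i))
    (hlaw : ∀ i, P.map (y i) = poissonMeasure (r i)) (hindep : iIndepFun y P) (v : ℝ) :
    Integrable (fun ω => exp (v * ∑ i, ((y i ω : ℝ) - r i) * c i)) P := by
  have := hindep.isProbabilityMeasure
  simpa only [Finset.sum_apply] using
    (iIndepFun_centered_poisson c hindep).integrable_exp_mul_sum (fun i => by fun_prop)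
      fun i _ => integrable_exp_mul_centered_poisson (hmeas i) (hlaw i) (c i) v

lemma mgf_sum_centered_poisson_le (c : ι → ℝ) (hmeas : ∀ i, Measurable (y i))
    (hlaw : ∀ i, P.map (y i) = poissonMeasure (r i)) (hindep : iIndepFun y P) {v : ℝ}
    (hv : ∀ i, |v * c i| ≤ 1) :
    mgf (fun ω => ∑ i, ((y i ω : ℝ) - r i) * c i) P v
      ≤ exp (v ^ 2 * ∑ i, r i * c i ^ 2) := by
  rw [← Finset.sum_fn, (iIndepFun_centered_poisson c hindep).mgf_sum (fun i => by fun_prop),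
    Finset.mul_sum, exp_sum]
  refine Finset.prod_le_prod (fun i _ => mgf_nonneg) fun i _ => ?_
  refine (mgf_centered_poisson_le (hmeas i) (hlaw i) (hv i)).trans_eq ?_
  ring_nf

theorem measureReal_lt_abs_sum_centered_poisson_le (c : ι → ℝ)
    (hmeas : ∀ i, Measurable (y i)) (hlaw : ∀ i, P.map (y i) = poissonMeasure (r i))
    (hindep : iIndepFun y P) (a : ℝ) {s : ℝ} (hs : 0 ≤ s) (hsc : ∀ i, |s * c i| ≤ 1) :
    P.real {ω | a < |∑ i, ((y i ω : ℝ) - r i) * c i|}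
      ≤ 2 * exp (-s * a + s ^ 2 * ∑ i, r i * c i ^ 2) := by
  have := hindep.isProbabilityMeasure
  have hmgf (v : ℝ) (hv : |v| = s) :
      mgf (fun ω => ∑ i, ((y i ω : ℝ) - r i) * c i) P v
        ≤ exp (s ^ 2 * ∑ i, r i * c i ^ 2) := by
    refine (mgf_sum_centered_poisson_le c hmeas hlaw hindep fun i => ?_).trans_eq
      (by rw [← sq_abs, hv])
    rw [abs_mul, hv, ← abs_of_nonneg hs, ← abs_mul]
    exact hsc i
  refine (measureReal_lt_abs_le_exp_mul_mgf a hs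
    (integrable_exp_mul_sum_centered_poisson c hmeas hlaw hindep s)
    (integrable_exp_mul_sum_centered_poisson c hmeas hlaw hindep (-s))).trans ?_
  set σ := ∑ i, (r i : ℝ) * c i ^ 2
  calc exp (-s * a) * (mgf _ P s + mgf _ P (-s))
      ≤ exp (-s * a) * (exp (s ^ 2 * σ) + exp (s ^ 2 * σ)) := by
        gcongr
        · exact hmgf s (abs_of_nonneg hs)
        · exact hmgf (-s) (by rw [abs_neg, abs_of_nonneg hs])
    _ = 2 * exp (-s * a + s ^ 2 * σ) := by rw [exp_add]; ring

end PoissonSum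

end ProbabilityTheory

lemma sum_mul_mul_div_sq_le {ι : Type*} [Fintype ι] {μ w : ι → ℝ} {n T M : ℝ} (hn : 0 < n)
    (hT : 0 < T) (hμ : ∀ i, μ i ≤ 1 / n) (hw : ∑ i, w i ^ 2 ≤ M / n) :
    ∑ i, T * μ i * (n * w i / T) ^ 2 ≤ M / T :=
  calc ∑ i, T * μ i * (n * w i / T) ^ 2 ≤ ∑ i, T * (1 / n) * (n * w i / T) ^ 2 := by
        gcongr with i
        exact hμ i
    _ = n / T * ∑ i, w i ^ 2 := by
        rw [Finset.mul_sum]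
        refine Finset.sum_congr rfl fun i _ => ?_
        field_simp
    _ ≤ n / T * (M / n) := by gcongr
    _ = M / T := by field_simp

lemma abs_mul_mul_div_le_one {t L M T n w : ℝ} (hM : 0 < M) (hn : 0 < n) (hT : 0 < T)
    (ht : t ^ 2 = 32 * M * L / T) (hnT : 2 * n * L ≤ T) (hw : w ^ 2 ≤ M / n) :
    |t * T / (4 * M) * (n * w / T)| ≤ 1 := by
  rw [← sq_le_one_iff_abs_le_one]
  calc (t * T / (4 * M) * (n * w / T)) ^ 2 = t ^ 2 * n ^ 2 * w ^ 2 / (16 * M ^ 2) := by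
        field_simp
        ring
    _ ≤ t ^ 2 * n ^ 2 * (M / n) / (16 * M ^ 2) := by gcongr
    _ = 2 * n * L / T := by
        rw [ht]
        field_simp
        ring
    _ ≤ 1 := by rwa [div_le_one hT]

/-- Tail bound for a weighted sum of centered Poisson variables: if
`y_i ~ Poisson(T μ_i)` are independent with `0 ≤ μ_i ≤ 1/n`, `T > 2n log p`, and
`Σ w_i² ≤ M/n`, then for `t = √(32 M log p / T)`,
`P(|Σ (y_i − Tμ_i)(n w_i/T)| > t/2) ≤ 2 exp(−t²T/(16M)) = 2/p²`. -/
theorem poisson_weighted_tail_bound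
    {Ω : Type*} [MeasurableSpace Ω] (P : Measure Ω) [IsProbabilityMeasure P]
    (n p : ℕ) (hn : 0 < n) (hp : 2 ≤ p)
    (T M : ℝ) (hM : 0 < M)
    (μ : Fin n → ℝ) (hμ0 : ∀ i, 0 ≤ μ i) (hμ1 : ∀ i, μ i ≤ 1 / n)
    (hT : 2 * (n : ℝ) * Real.log p < T)
    (y : Fin n → Ω → ℕ)
    (hmeas : ∀ i, Measurable (y i))
    (hlaw : ∀ i, Measure.map (y i) P = poissonMeasure (T * μ i).toNNReal)
    (hindep : iIndepFun y P)
    (w : Fin n → ℝ) (hw : ∑ i, (w i) ^ 2 ≤ M / n) :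
    P {ω | Real.sqrt (32 * M * Real.log p / T) / 2 <
        |∑ i, ((y i ω : ℝ) - T * μ i) * ((n : ℝ) * w i / T)|} ≤
      ENNReal.ofReal (2 * Real.exp
        (-((Real.sqrt (32 * M * Real.log p / T)) ^ 2 * T / (16 * M)))) ∧
    2 * Real.exp (-((Real.sqrt (32 * M * Real.log p / T)) ^ 2 * T / (16 * M))) =
      2 / (p : ℝ) ^ 2 := by
  have hn' : (0 : ℝ) < n := by exact_mod_cast hn
  have hT0 : 0 < T := lt_of_le_of_lt (by positivity) hT
  set t := √(32 * M * log p / T)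
  have ht2 : t ^ 2 = 32 * M * log p / T := sq_sqrt (by positivity)
  refine ⟨?_, ?_⟩
  · set s := t * T / (4 * M)
    have hsc (i : Fin n) : |s * (n * w i / T)| ≤ 1 :=
      abs_mul_mul_div_le_one hM hn' hT0 ht2 hT.le
        ((Finset.single_le_sum (fun j _ => sq_nonneg (w j)) (Finset.mem_univ i)).trans hw)
    have hr (i : Fin n) : ((T * μ i).toNNReal : ℝ) = T * μ i :=
      coe_toNNReal _ (mul_nonneg hT0.le (hμ0 i))
    have htail := measureReal_lt_abs_sum_centered_poisson_le (fun i => n * w i / T) hmeas hlaw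
      hindep (t / 2) (by positivity) hsc
    simp only [hr] at htail
    rw [← ENNReal.ofReal_toReal (measure_ne_top P _)]
    refine ENNReal.ofReal_le_ofReal (htail.trans ?_)
    gcongr
    -- `s` minimizes `-s * (t / 2) + s ^ 2 * (M / T)`
    calc -s * (t / 2) + s ^ 2 * ∑ i, T * μ i * (n * w i / T) ^ 2
        ≤ -s * (t / 2) + s ^ 2 * (M / T) := by
          gcongr
          exact sum_mul_mul_div_sq_le hn' hT0 hμ1 hw
      _ = -(t ^ 2 * T / (16 * M)) := by simp only [s]; field_simp; ring
  · have hexponent : 32 * M * log p / T * T / (16 * M) = log ((p : ℝ) ^ 2) := by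
      rw [log_pow]
      field_simp
      ring
    rw [ht2, hexponent, exp_neg, exp_log (by positivity), div_eq_mul_inv]
end
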